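/- In the ring ℝ[[x,y]] of formal power series in two variables over ℝ, let J be the ideal generated by 5x⁴+3x²y³, 3x³y²+5y⁵, and y⁶, and let b₀ = x⁵+x³y³+y⁵. Then b₀ ∉ J but b₀² ∈ J; that is, the class of b₀ in ℝ[[x,y]]/J is a nonzero element whose square is zero. -/

import Mathlib

/-!
The linear functional `f ↦ 5·[x³y²]f − 3·[y⁵]f` on coefficients vanishes on `J`: multiplying a
generator by a nonconstant monomial pushes it past both `x³y²` and `y⁵`, and on the generators
themselves the two coefficients are proportional. It does not vanish on `b₀`, so `b₀ ∉ J`.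
On the other hand `75 b₀²` is an explicit polynomial combination of the generators.
-/

/-- The variable `x` in `ℝ[[x,y]]`. -/
noncomputable def psX : MvPowerSeries (Fin 2) ℝ := MvPowerSeries.X 0

/-- The variable `y` in `ℝ[[x,y]]`. -/
noncomputable def psY : MvPowerSeries (Fin 2) ℝ := MvPowerSeries.X 1

namespace PowerSeriesXY

open MvPowerSeries Finsupp

noncomputable def xyExp (a b : ℕ) : Fin 2 →₀ ℕ := single 0 a + single 1 b

lemma xyExp_le_xyExp {a b c d : ℕ} : xyExp a b ≤ xyExp c d ↔ a ≤ c ∧ b ≤ d := by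
  simp [Finsupp.le_def, Fin.forall_fin_two, xyExp]

lemma xyExp_inj {a b c d : ℕ} : xyExp a b = xyExp c d ↔ a = c ∧ b = d := by
  simp only [le_antisymm_iff, xyExp_le_xyExp]
  tauto

lemma xyExp_sub_xyExp (a b c d : ℕ) : xyExp c d - xyExp a b = xyExp (c - a) (d - b) := by
  ext i
  fin_cases i <;> simp [xyExp]

lemma monomial_xyExp (a b : ℕ) (r : ℝ) : monomial (xyExp a b) r = C r * psX ^ a * psY ^ b := by
  rw [psX, psY, X_pow_eq, X_pow_eq, mul_assoc, monomial_mul_monomial, one_mul, xyExp,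
    ← smul_eq_C_mul, ← map_smul, smul_eq_mul, mul_one]

lemma coeff_xyExp_mul_monomial (f : MvPowerSeries (Fin 2) ℝ) (a b c d : ℕ) (r : ℝ) :
    coeff (xyExp c d) (f * monomial (xyExp a b) r) =
      if a ≤ c ∧ b ≤ d then coeff (xyExp (c - a) (d - b)) f * r else 0 := by
  simp only [coeff_mul_monomial, xyExp_le_xyExp, xyExp_sub_xyExp]

lemma coeff_xyExp_monomial (a b c d : ℕ) (r : ℝ) :
    coeff (xyExp c d) (monomial (xyExp a b) r) = if a = c ∧ b = d then r else 0 := by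
  classical
  simp only [coeff_monomial, xyExp_inj, eq_comm]

noncomputable def b₀ : MvPowerSeries (Fin 2) ℝ := psX ^ 5 + psX ^ 3 * psY ^ 3 + psY ^ 5

noncomputable def J : Ideal (MvPowerSeries (Fin 2) ℝ) :=
  Ideal.span {5 * psX ^ 4 + 3 * psX ^ 2 * psY ^ 3, 3 * psX ^ 3 * psY ^ 2 + 5 * psY ^ 5, psY ^ 6}

lemma J_eq_span_monomials : J = Ideal.span
    {monomial (xyExp 4 0) 5 + monomial (xyExp 2 3) 3,
      monomial (xyExp 3 2) 3 + monomial (xyExp 0 5) 5, monomial (xyExp 0 6) 1} := by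
  simp [J, monomial_xyExp, map_ofNat]

lemma five_mul_coeff_x3y2_eq_three_mul_coeff_y5_of_mem {f : MvPowerSeries (Fin 2) ℝ}
    (hf : f ∈ J) :
    5 * coeff (xyExp 3 2) f = 3 * coeff (xyExp 0 5) f := by
  rw [J_eq_span_monomials, Ideal.mem_span_insert] at hf
  obtain ⟨p, g, hg, rfl⟩ := hf
  simp only [Ideal.mem_span_insert, Ideal.mem_span_singleton'] at hg
  obtain ⟨q, -, ⟨r, rfl⟩, rfl⟩ := hg
  simp only [mul_add, map_add, coeff_xyExp_mul_monomial]
  norm_num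
  ring

lemma b₀_notMem_J : b₀ ∉ J := by
  intro h
  have key := five_mul_coeff_x3y2_eq_three_mul_coeff_y5_of_mem h
  have hb : b₀ = monomial (xyExp 5 0) 1 + monomial (xyExp 3 3) 1 + monomial (xyExp 0 5) 1 := by
    simp [b₀, monomial_xyExp]
  simp only [hb, map_add, coeff_xyExp_monomial] at key
  norm_num at key

lemma seventy_five_mul_b₀_sq_mem_J : 75 * b₀ ^ 2 ∈ J := by
  have hg₁ : 5 * psX ^ 4 + 3 * psX ^ 2 * psY ^ 3 ∈ J := Ideal.subset_span (by simp)
  have hg₂ : 3 * psX ^ 3 * psY ^ 2 + 5 * psY ^ 5 ∈ J := Ideal.subset_span (by simp)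
  have hg₃ : psY ^ 6 ∈ J := Ideal.subset_span (by simp)
  have h : 75 * b₀ ^ 2 =
      (15 * psX ^ 6 + 21 * psX ^ 4 * psY ^ 3) * (5 * psX ^ 4 + 3 * psX ^ 2 * psY ^ 3) +
      50 * psX ^ 2 * psY ^ 3 * (3 * psX ^ 3 * psY ^ 2 + 5 * psY ^ 5) +
      (12 * psX ^ 6 + 150 * psX ^ 3 * psY ^ 2 - 250 * psX ^ 2 * psY ^ 2 + 75 * psY ^ 4) *
        psY ^ 6 := by
    rw [b₀]; ring
  rw [h]
  exact J.add_mem (J.add_mem (J.mul_mem_left _ hg₁) (J.mul_mem_left _ hg₂)) (J.mul_mem_left _ hg₃)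

lemma b₀_sq_mem_J : b₀ ^ 2 ∈ J := by
  have h75 : IsUnit (75 : MvPowerSeries (Fin 2) ℝ) := by
    simpa [map_ofNat] using (IsUnit.mk0 (75 : ℝ) (by norm_num)).map (C (σ := Fin 2))
  exact (Ideal.unit_mul_mem_iff_mem J h75).mp seventy_five_mul_b₀_sq_mem_J

end PowerSeriesXY

theorem stmt_9 :
    psX ^ 5 + psX ^ 3 * psY ^ 3 + psY ^ 5 ∉
      Ideal.span ({5 * psX ^ 4 + 3 * psX ^ 2 * psY ^ 3,
        3 * psX ^ 3 * psY ^ 2 + 5 * psY ^ 5, psY ^ 6} : Set (MvPowerSeries (Fin 2) ℝ)) ∧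
    (psX ^ 5 + psX ^ 3 * psY ^ 3 + psY ^ 5) ^ 2 ∈
      Ideal.span ({5 * psX ^ 4 + 3 * psX ^ 2 * psY ^ 3,
        3 * psX ^ 3 * psY ^ 2 + 5 * psY ^ 5, psY ^ 6} : Set (MvPowerSeries (Fin 2) ℝ)) :=
  ⟨PowerSeriesXY.b₀_notMem_J, PowerSeriesXY.b₀_sq_mem_J⟩
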